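/- If M is a 2-primal module, then E_M(β(M)) = β(M); in particular, E_M(β(M)) is a submodule of M. -/

import Mathlib

/-- A submodule `P` is completely prime if it is proper and `a • m ∈ P` implies
`m ∈ P` or `a • M ⊆ P`. -/
def IsCompletelyPrimeSubmodule {R : Type*} [Ring R] {M : Type*} [AddCommGroup M] [Module R M]
    (P : Submodule R M) : Prop :=
  P ≠ ⊤ ∧ ∀ (a : R) (m : M), a • m ∈ P → m ∈ P ∨ ∀ x : M, a • x ∈ P

/-- A submodule `P` is prime if it is proper and for every two-sided ideal `A` of `R`
and submodule `N`, `A N ⊆ P` implies `N ⊆ P` or `A M ⊆ P`. -/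
def IsPrimeSubmodule {R : Type*} [Ring R] {M : Type*} [AddCommGroup M] [Module R M]
    (P : Submodule R M) : Prop :=
  P ≠ ⊤ ∧ ∀ (A : TwoSidedIdeal R) (N : Submodule R M),
    (∀ a ∈ A, ∀ n ∈ N, a • n ∈ P) → N ≤ P ∨ ∀ a ∈ A, ∀ x : M, a • x ∈ P

/-- The prime radical `β(N)`: the intersection of all prime submodules containing `N`
(equal to `⊤ = M` if there are none). -/
def primeRadical {R : Type*} [Ring R] {M : Type*} [AddCommGroup M] [Module R M]
    (N : Submodule R M) : Submodule R M :=
  sInf {P | IsPrimeSubmodule P ∧ N ≤ P}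

/-- The completely prime radical `β_co(N)`: the intersection of all completely prime
submodules containing `N` (equal to `⊤ = M` if there are none). -/
def cpRadical {R : Type*} [Ring R] {M : Type*} [AddCommGroup M] [Module R M]
    (N : Submodule R M) : Submodule R M :=
  sInf {P | IsCompletelyPrimeSubmodule P ∧ N ≤ P}

/-- The envelope `E_M(N) = {r • m : r^k • m ∈ N for some positive integer k}`. -/
def envelope {R : Type*} [Ring R] {M : Type*} [AddCommGroup M] [Module R M]
    (N : Submodule R M) : Set M :=
  {x | ∃ (r : R) (m : M) (k : ℕ), 0 < k ∧ r ^ k • m ∈ N ∧ x = r • m}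

/-- A submodule `N` is completely semiprime if `a ^ 2 • m ∈ N` implies `a • m ∈ N`. -/
def IsCompletelySemiprimeSubmodule {R : Type*} [Ring R] {M : Type*} [AddCommGroup M]
    [Module R M] (N : Submodule R M) : Prop :=
  ∀ (a : R) (m : M), a ^ 2 • m ∈ N → a • m ∈ N

/-! Two-primality identifies `β(M)` with `β_co(M)`, which is completely semiprime: if `a² m` lies
in a completely prime `P`, then either `a m ∈ P` or `a M ⊆ P`, and in both cases `a m ∈ P`.
Complete semiprimeness lowers any exponent `r ^ k • m ∈ N` to `r • m ∈ N`, so the envelope of a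
completely semiprime submodule adds nothing to it. -/

section Envelope

variable {R : Type*} [Ring R] {M : Type*} [AddCommGroup M] [Module R M]

theorem isCompletelySemiprimeSubmodule_cpRadical (N : Submodule R M) :
    IsCompletelySemiprimeSubmodule (cpRadical N) := by
  intro a m h
  rw [cpRadical, Submodule.mem_sInf] at h ⊢
  intro P hP
  have ha : a • (a • m) ∈ P := by
    rw [smul_smul, ← sq]
    exact h P hP
  exact (hP.1.2 a (a • m) ha).elim id (· m)

theorem IsCompletelySemiprimeSubmodule.smul_mem_of_pow_succ_smul_mem {N : Submodule R M}
    (hN : IsCompletelySemiprimeSubmodule N) {r : R} {m : M} (j : ℕ)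
    (h : r ^ (j + 1) • m ∈ N) : r • m ∈ N := by
  induction j with
  | zero => simpa using h
  | succ j ih =>
    have hsq : r ^ 2 • (r ^ j • m) ∈ N := by
      rwa [smul_smul, ← pow_add, add_comm]
    have hlower := hN r (r ^ j • m) hsq
    rw [smul_smul, ← pow_succ'] at hlower
    exact ih hlower

theorem subset_envelope (N : Submodule R M) : (N : Set M) ⊆ envelope N :=
  fun x hx => ⟨1, x, 1, one_pos, by simpa using hx, (one_smul R x).symm⟩

theorem IsCompletelySemiprimeSubmodule.envelope_eq {N : Submodule R M}
    (hN : IsCompletelySemiprimeSubmodule N) : envelope N = N := by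
  refine Set.Subset.antisymm ?_ (subset_envelope N)
  rintro _ ⟨r, m, k, hk, hmem, rfl⟩
  obtain ⟨j, rfl⟩ := Nat.exists_eq_add_of_lt hk
  exact hN.smul_mem_of_pow_succ_smul_mem j (by simpa using hmem)

end Envelope

/-- if `M` is 2-primal then `E_M(β(M)) = β(M)`; in particular it is a
submodule of `M`. -/
theorem envelope_primeRadical_eq_of_twoPrimal {R : Type*} [Ring R] {M : Type*}
    [AddCommGroup M] [Module R M]
    (h2p : cpRadical (⊥ : Submodule R M) = primeRadical (⊥ : Submodule R M)) :
    envelope (primeRadical (⊥ : Submodule R M)) = ((primeRadical (⊥ : Submodule R M) : Submodule R M) : Set M) ∧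
      ∃ S : Submodule R M, (S : Set M) = envelope (primeRadical (⊥ : Submodule R M)) := by
  have hsemiprime : IsCompletelySemiprimeSubmodule (primeRadical (⊥ : Submodule R M)) :=
    h2p ▸ isCompletelySemiprimeSubmodule_cpRadical ⊥
  exact ⟨hsemiprime.envelope_eq, _, hsemiprime.envelope_eq.symm⟩
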